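/- arXiv:1412.1784 — 10 statements merged into one kernel-verified Lean document; each statement's English description precedes it below -/
import Mathlib

section
/- If two FSMs M1 and M2 are each critically observable, then their parallel composition M1 || M2 is critically observable. -/
open Classical

/-- A finite state machine with an alphabet, initial states, nondeterministic
transition map and a set of critical states. -/
structure FSM (S A : Type) where
  alph : Set A
  init : Set S
  tr : S → A → Set S
  crit : Set S

namespace FSM

variable {S S1 S2 S3 S4 A T : Type}

/-- Extended transition map on words. -/
def ehat (M : FSM S A) : S → List A → Set S
  | x, [] => {x}
  | x, σ :: w => ⋃ y ∈ M.tr x σ, M.ehat y w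

/-- Set of states reachable from the initial states by reading `w`. -/
def reach (M : FSM S A) (w : List A) : Set S := ⋃ x0 ∈ M.init, M.ehat x0 w

/-- Critical observability: after any trace, the reachable set is uniformly
critical or uniformly non-critical. -/
def CritObs (M : FSM S A) : Prop :=
  ∀ w : List A, M.reach w ⊆ M.crit ∨ M.reach w ⊆ M.critᶜ

/-- Parallel composition of two FSMs: synchronization on shared labels,
interleaving on private labels; a composite state is critical iff some
component is critical. -/
def par (M1 : FSM S1 A) (M2 : FSM S2 A) : FSM (S1 × S2) A where
  alph := M1.alph ∪ M2.alph
  init := M1.init ×ˢ M2.init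
  tr := fun p σ =>
    {q | (σ ∈ M1.alph ∧ σ ∈ M2.alph ∧ q.1 ∈ M1.tr p.1 σ ∧ q.2 ∈ M2.tr p.2 σ) ∨
         (σ ∈ M1.alph ∧ σ ∉ M2.alph ∧ q.1 ∈ M1.tr p.1 σ ∧ q.2 = p.2) ∨
         (σ ∉ M1.alph ∧ σ ∈ M2.alph ∧ q.1 = p.1 ∧ q.2 ∈ M2.tr p.2 σ)}
  crit := {p | p.1 ∈ M1.crit ∨ p.2 ∈ M2.crit}

/-- Accessible states. -/
def Acc (M : FSM S A) (x : S) : Prop := ∃ x0 ∈ M.init, ∃ w : List A, x ∈ M.ehat x0 w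

/-- Projection of a word onto a sub-alphabet. -/
noncomputable def proj (E : Set A) : List A → List A
  | [] => []
  | σ :: w => if σ ∈ E then σ :: proj E w else proj E w

/-- One step of the powerset observer. -/
def obsStep (M : FSM S A) (z : Set S) (σ : A) : Set S := ⋃ x ∈ z, M.tr x σ

/-- Run of the (deterministic) powerset observer on a word. -/
def obsRun (M : FSM S A) : Set S → List A → Set S
  | z, [] => z
  | z, σ :: w => M.obsRun (M.obsStep z σ) w

/-- The powerset observer of `M`, viewed as an FSM; its critical states encode
output `H(z) = 1`, i.e. `z ∩ C ≠ ∅`. -/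
def obsFSM (M : FSM S A) : FSM (Set S) A where
  alph := M.alph
  init := {M.init}
  tr := fun z σ => {M.obsStep z σ}
  crit := {z | (z ∩ M.crit).Nonempty}

/-- Isomorphism of FSMs via a given bijection. -/
def IsoVia (M1 : FSM S1 A) (M2 : FSM S2 A) (φ : S1 → S2) : Prop :=
  Function.Bijective φ ∧ φ '' M1.init = M2.init ∧
  (∀ x, M1.Acc x → ∀ σ, φ '' M1.tr x σ = M2.tr (φ x) σ) ∧
  (∀ x, x ∈ M1.crit ↔ φ x ∈ M2.crit)

/-- Isomorphism of FSMs. -/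
def Iso (M1 : FSM S1 A) (M2 : FSM S2 A) : Prop :=
  M1.alph = M2.alph ∧ ∃ φ : S1 → S2, IsoVia M1 M2 φ

/-- `R` is a (critical-state-preserving) bisimulation between `M1` and `M2`. -/
def IsBisim (M1 : FSM S1 A) (M2 : FSM S2 A) (R : Set (S1 × S2)) : Prop :=
  (∀ p ∈ R, (p.1 ∈ M1.init ↔ p.2 ∈ M2.init)) ∧
  (∀ p ∈ R, ∀ σ : A, ∀ x1' ∈ M1.tr p.1 σ, ∃ x2' ∈ M2.tr p.2 σ, (x1', x2') ∈ R) ∧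
  (∀ p ∈ R, ∀ σ : A, ∀ x2' ∈ M2.tr p.2 σ, ∃ x1' ∈ M1.tr p.1 σ, (x1', x2') ∈ R) ∧
  (∀ p ∈ R, (p.1 ∈ M1.crit ↔ p.2 ∈ M2.crit))

/-- Bisimilarity: a bisimulation exists, alphabets coincide, and initial states
are totally matched. -/
def Bisimilar (M1 : FSM S1 A) (M2 : FSM S2 A) : Prop :=
  M1.alph = M2.alph ∧
  ∃ R : Set (S1 × S2), IsBisim M1 M2 R ∧
    (∀ x1 ∈ M1.init, ∃ x2 ∈ M2.init, (x1, x2) ∈ R) ∧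
    (∀ x2 ∈ M2.init, ∃ x1 ∈ M1.init, (x1, x2) ∈ R)

/-- Parallel composition of an arbitrary family of FSMs. -/
def parN {ι : Type} {S : ι → Type} (M : ∀ i, FSM (S i) A) : FSM (∀ i, S i) A where
  alph := ⋃ i, (M i).alph
  init := {p | ∀ i, p i ∈ (M i).init}
  tr := fun p σ =>
    {q | σ ∈ ⋃ i, (M i).alph ∧
      ∀ i, (σ ∈ (M i).alph → q i ∈ (M i).tr (p i) σ) ∧ (σ ∉ (M i).alph → q i = p i)}
  crit := {p | ∃ i, p i ∈ (M i).crit}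

end FSM

/-- A deterministic FSM with boolean outputs (an abstract observer). -/
structure DObs (T A : Type) where
  init : T
  tr : T → A → T
  out : T → Bool

/-- Run of a deterministic observer on a word. -/
def DObs.run {T A : Type} (O : DObs T A) : T → List A → T
  | z, [] => z
  | z, σ :: w => O.run (O.tr z σ) w

/-- `O` is a critical observer for `M`: along every run of `M`, the output of
the corresponding observer run is 1 exactly at critical states. -/
def DObs.IsCritObserver {T S A : Type} (O : DObs T A) (M : FSM S A) : Prop :=
  ∀ x0 ∈ M.init, ∀ w : List A, ∀ x ∈ M.ehat x0 w,
    (O.out (O.run O.init w) = true ↔ x ∈ M.crit)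


lemma par_proj {S1 S2 A : Type} (M1 : FSM S1 A) (M2 : FSM S2 A) :
    ∀ (w : List A) (x1 : S1) (x2 : S2) (p : S1 × S2),
      p ∈ (M1.par M2).ehat (x1, x2) w →
      p.1 ∈ M1.ehat x1 (FSM.proj M1.alph w) ∧ p.2 ∈ M2.ehat x2 (FSM.proj M2.alph w) := by
  intro w
  induction w with
  | nil =>
    intro x1 x2 p hp
    simp [FSM.ehat, FSM.proj] at hp ⊢
    simp [hp]
  | cons σ w ih =>
    intro x1 x2 p hp
    simp only [FSM.ehat, Set.mem_iUnion] at hp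
    obtain ⟨q, hq, hpq⟩ := hp
    obtain ⟨h1', h2'⟩ := ih q.1 q.2 p hpq
    simp only [FSM.par, Set.mem_setOf_eq] at hq
    rcases hq with ⟨ha1, ha2, ht1, ht2⟩ | ⟨ha1, ha2, ht1, ht2⟩ | ⟨ha1, ha2, ht1, ht2⟩
    · constructor
      · simp only [FSM.proj, if_pos ha1, FSM.ehat, Set.mem_iUnion]
        exact ⟨q.1, ht1, h1'⟩
      · simp only [FSM.proj, if_pos ha2, FSM.ehat, Set.mem_iUnion]
        exact ⟨q.2, ht2, h2'⟩
    · constructor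
      · simp only [FSM.proj, if_pos ha1, FSM.ehat, Set.mem_iUnion]
        exact ⟨q.1, ht1, h1'⟩
      · simpa only [FSM.proj, if_neg ha2, ← ht2] using h2'
    · constructor
      · simpa only [FSM.proj, if_neg ha1, ← ht1] using h1'
      · simp only [FSM.proj, if_pos ha2, FSM.ehat, Set.mem_iUnion]
        exact ⟨q.2, ht2, h2'⟩

lemma par_reach_proj {S1 S2 A : Type} (M1 : FSM S1 A) (M2 : FSM S2 A)
    (w : List A) (p : S1 × S2) (hp : p ∈ (M1.par M2).reach w) :
    p.1 ∈ M1.reach (FSM.proj M1.alph w) ∧ p.2 ∈ M2.reach (FSM.proj M2.alph w) := by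
  simp only [FSM.reach, Set.mem_iUnion] at hp ⊢
  obtain ⟨x0, hx0, hp⟩ := hp
  simp only [FSM.par, Set.mem_prod] at hx0
  obtain ⟨h1, h2⟩ := par_proj M1 M2 w x0.1 x0.2 p (by simpa using hp)
  exact ⟨⟨x0.1, hx0.1, h1⟩, ⟨x0.2, hx0.2, h2⟩⟩

/-- If `M1` and `M2` are critically observable, so is `M1 || M2`. -/
theorem stmt_3 {S1 S2 A : Type} (M1 : FSM S1 A) (M2 : FSM S2 A)
    (h1 : M1.CritObs) (h2 : M2.CritObs) : (M1.par M2).CritObs := by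
  intro w
  rcases h1 (FSM.proj M1.alph w) with hc1 | hc1
  · left
    intro p hp
    exact Or.inl (hc1 (par_reach_proj M1 M2 w p hp).1)
  · rcases h2 (FSM.proj M2.alph w) with hc2 | hc2
    · left
      intro p hp
      exact Or.inr (hc2 (par_reach_proj M1 M2 w p hp).2)
    · right
      intro p hp hcrit
      obtain ⟨hp1, hp2⟩ := par_reach_proj M1 M2 w p hp
      rcases hcrit with h | h
      · exact hc1 hp1 h
      · exact hc2 hp2 h
end

section
/- An FSM M is critically observable if and only if every accessible state z of its powerset observer Obs(M) with output H(z) = 1 satisfies z ⊆ C (i.e., every observer state intersecting C is entirely contained in C). -/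
open Classical

/-- `M` is critically observable iff every accessible observer
state with output 1 (i.e. intersecting `C`) is entirely contained in `C`. -/
theorem stmt_6 {S A : Type} (M : FSM S A)
    (h0 : M.init ⊆ M.crit ∨ M.init ⊆ M.critᶜ) :
    M.CritObs ↔
      ∀ w : List A, (M.obsRun M.init w ∩ M.crit).Nonempty →
        M.obsRun M.init w ⊆ M.crit := by
  have key : ∀ (w : List A) (z : Set S), M.obsRun z w = ⋃ x ∈ z, M.ehat x w := by
    intro w
    induction w with
    | nil => intro z; simp [FSM.obsRun, FSM.ehat]
    | cons σ w ih =>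
      intro z
      simp only [FSM.obsRun, ih, FSM.ehat, FSM.obsStep]
      ext y
      simp only [Set.mem_iUnion]
      constructor
      · rintro ⟨x, ⟨x', hx', hx⟩, hy⟩; exact ⟨x', hx', x, hx, hy⟩
      · rintro ⟨x', hx', x, hx, hy⟩; exact ⟨x, ⟨x', hx', hx⟩, hy⟩
  have hre : ∀ w : List A, M.obsRun M.init w = M.reach w := fun w => key w M.init
  constructor
  · intro h w hne
    rw [hre] at hne ⊢
    rcases h w with h1 | h1
    · exact h1
    · rcases hne with ⟨x, hx1, hx2⟩
      exact absurd hx2 (h1 hx1)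
  · intro h w
    by_cases hne : (M.reach w ∩ M.crit).Nonempty
    · left; rw [← hre] at hne ⊢; exact h w hne
    · right
      intro x hx hxc
      exact hne ⟨x, hx, hxc⟩
end

section
/- If FSMs M1 and M2 are bisimilar (with a bisimulation relation preserving critical states), then M1 is critically observable if and only if M2 is critically observable. -/
open Classical

lemma ehat_lift {S1 S2 A : Type} {M1 : FSM S1 A} {M2 : FSM S2 A} {R : Set (S1 × S2)}
    (hR : FSM.IsBisim M1 M2 R) :
    ∀ (w : List A) (x1 : S1) (x2 : S2), (x1, x2) ∈ R →
      ∀ x1' ∈ M1.ehat x1 w, ∃ x2' ∈ M2.ehat x2 w, (x1', x2') ∈ R := by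
  intro w
  induction w with
  | nil =>
    intro x1 x2 hx x1' h1
    simp [FSM.ehat] at h1
    subst h1
    exact ⟨x2, by simp [FSM.ehat], hx⟩
  | cons σ w ih =>
    intro x1 x2 hx x1' h1
    simp only [FSM.ehat, Set.mem_iUnion] at h1
    obtain ⟨y1, hy1, h1'⟩ := h1
    obtain ⟨y2, hy2, hyR⟩ := hR.2.1 (x1, x2) hx σ y1 hy1
    obtain ⟨x2', hx2', hR'⟩ := ih y1 y2 hyR x1' h1'
    exact ⟨x2', by simp only [FSM.ehat, Set.mem_iUnion]; exact ⟨y2, hy2, hx2'⟩, hR'⟩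

lemma ehat_lift' {S1 S2 A : Type} {M1 : FSM S1 A} {M2 : FSM S2 A} {R : Set (S1 × S2)}
    (hR : FSM.IsBisim M1 M2 R) :
    ∀ (w : List A) (x1 : S1) (x2 : S2), (x1, x2) ∈ R →
      ∀ x2' ∈ M2.ehat x2 w, ∃ x1' ∈ M1.ehat x1 w, (x1', x2') ∈ R := by
  intro w
  induction w with
  | nil =>
    intro x1 x2 hx x2' h2
    simp [FSM.ehat] at h2
    subst h2
    exact ⟨x1, by simp [FSM.ehat], hx⟩
  | cons σ w ih =>
    intro x1 x2 hx x2' h2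
    simp only [FSM.ehat, Set.mem_iUnion] at h2
    obtain ⟨y2, hy2, h2'⟩ := h2
    obtain ⟨y1, hy1, hyR⟩ := hR.2.2.1 (x1, x2) hx σ y2 hy2
    obtain ⟨x1', hx1', hR'⟩ := ih y1 y2 hyR x2' h2'
    exact ⟨x1', by simp only [FSM.ehat, Set.mem_iUnion]; exact ⟨y1, hy1, hx1'⟩, hR'⟩

lemma reach_lift {S1 S2 A : Type} {M1 : FSM S1 A} {M2 : FSM S2 A} {R : Set (S1 × S2)}
    (hR : FSM.IsBisim M1 M2 R)
    (hinit : ∀ x1 ∈ M1.init, ∃ x2 ∈ M2.init, (x1, x2) ∈ R) :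
    ∀ (w : List A), ∀ x ∈ M1.reach w, ∃ y ∈ M2.reach w, (x, y) ∈ R := by
  intro w x hx
  simp only [FSM.reach, Set.mem_iUnion] at hx
  obtain ⟨x0, hx0, hxe⟩ := hx
  obtain ⟨y0, hy0, hR0⟩ := hinit x0 hx0
  obtain ⟨y, hye, hxyR⟩ := ehat_lift hR w x0 y0 hR0 x hxe
  exact ⟨y, by simp only [FSM.reach, Set.mem_iUnion]; exact ⟨y0, hy0, hye⟩, hxyR⟩

lemma reach_lift' {S1 S2 A : Type} {M1 : FSM S1 A} {M2 : FSM S2 A} {R : Set (S1 × S2)}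
    (hR : FSM.IsBisim M1 M2 R)
    (hinit : ∀ x2 ∈ M2.init, ∃ x1 ∈ M1.init, (x1, x2) ∈ R) :
    ∀ (w : List A), ∀ y ∈ M2.reach w, ∃ x ∈ M1.reach w, (x, y) ∈ R := by
  intro w y hy
  simp only [FSM.reach, Set.mem_iUnion] at hy
  obtain ⟨y0, hy0, hye⟩ := hy
  obtain ⟨x0, hx0, hR0⟩ := hinit y0 hy0
  obtain ⟨x, hxe, hxyR⟩ := ehat_lift' hR w x0 y0 hR0 y hye
  exact ⟨x, by simp only [FSM.reach, Set.mem_iUnion]; exact ⟨x0, hx0, hxe⟩, hxyR⟩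

/-- Bisimilar FSMs are equi-critically-observable. -/
theorem stmt_9 {S1 S2 A : Type} (M1 : FSM S1 A) (M2 : FSM S2 A)
    (h : M1.Bisimilar M2) : M1.CritObs ↔ M2.CritObs := by
  obtain ⟨halph, R, hR, hi12, hi21⟩ := h
  constructor
  · intro h1 w
    rcases h1 w with hc | hc
    · left
      intro y hy
      obtain ⟨x, hx, hxy⟩ := reach_lift' hR hi21 w y hy
      exact (hR.2.2.2 (x, y) hxy).mp (hc hx)
    · right
      intro y hy
      obtain ⟨x, hx, hxy⟩ := reach_lift' hR hi21 w y hy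
      exact fun hyc => (hc hx) ((hR.2.2.2 (x, y) hxy).mpr hyc)
  · intro h2 w
    rcases h2 w with hc | hc
    · left
      intro x hx
      obtain ⟨y, hy, hxy⟩ := reach_lift hR hi12 w x hx
      exact (hR.2.2.2 (x, y) hxy).mpr (hc hy)
    · right
      intro x hx
      obtain ⟨y, hy, hxy⟩ := reach_lift hR hi12 w x hx
      exact fun hxc => (hc hy) ((hR.2.2.2 (x, y) hxy).mp hxc)
end

section
/- If FSMs M1 and M2 are bisimilar (with a critical-state-preserving bisimulation), then an FSM Obs is a critical observer for M1 if and only if it is a critical observer for M2. -/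
open Classical

lemma bisim_ehat {S1 S2 A : Type} {M1 : FSM S1 A} {M2 : FSM S2 A} {R : Set (S1 × S2)}
    (hR : FSM.IsBisim M1 M2 R) :
    ∀ w : List A, ∀ x1 x2, (x1, x2) ∈ R → ∀ y1 ∈ M1.ehat x1 w,
      ∃ y2 ∈ M2.ehat x2 w, (y1, y2) ∈ R := by
  intro w
  induction w with
  | nil =>
    intro x1 x2 hx y1 hy1
    simp [FSM.ehat] at hy1
    subst hy1
    exact ⟨x2, by simp [FSM.ehat], hx⟩
  | cons σ w ih =>
    intro x1 x2 hx y1 hy1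
    simp only [FSM.ehat, Set.mem_iUnion] at hy1
    obtain ⟨z1, hz1, hy1⟩ := hy1
    obtain ⟨z2, hz2, hz⟩ := hR.2.1 (x1, x2) hx σ z1 hz1
    obtain ⟨y2, hy2, hy⟩ := ih z1 z2 hz y1 hy1
    exact ⟨y2, by simp only [FSM.ehat, Set.mem_iUnion]; exact ⟨z2, hz2, hy2⟩, hy⟩

lemma bisim_ehat' {S1 S2 A : Type} {M1 : FSM S1 A} {M2 : FSM S2 A} {R : Set (S1 × S2)}
    (hR : FSM.IsBisim M1 M2 R) :
    ∀ w : List A, ∀ x1 x2, (x1, x2) ∈ R → ∀ y2 ∈ M2.ehat x2 w,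
      ∃ y1 ∈ M1.ehat x1 w, (y1, y2) ∈ R := by
  intro w
  induction w with
  | nil =>
    intro x1 x2 hx y2 hy2
    simp [FSM.ehat] at hy2
    subst hy2
    exact ⟨x1, by simp [FSM.ehat], hx⟩
  | cons σ w ih =>
    intro x1 x2 hx y2 hy2
    simp only [FSM.ehat, Set.mem_iUnion] at hy2
    obtain ⟨z2, hz2, hy2⟩ := hy2
    obtain ⟨z1, hz1, hz⟩ := hR.2.2.1 (x1, x2) hx σ z2 hz2
    obtain ⟨y1, hy1, hy⟩ := ih z1 z2 hz y2 hy2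
    exact ⟨y1, by simp only [FSM.ehat, Set.mem_iUnion]; exact ⟨z1, hz1, hy1⟩, hy⟩

/-- If `M1` and `M2` are bisimilar, an FSM `Obs` is a critical
observer for `M1` iff it is a critical observer for `M2`. -/
theorem stmt_10 {S1 S2 A T : Type} (M1 : FSM S1 A) (M2 : FSM S2 A)
    (h : M1.Bisimilar M2) (O : DObs T A) :
    O.IsCritObserver M1 ↔ O.IsCritObserver M2 := by
  obtain ⟨-, R, hR, hi1, hi2⟩ := h
  constructor
  · intro hO x0 hx0 w x hx
    obtain ⟨y0, hy0, hy⟩ := hi2 x0 hx0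
    obtain ⟨y, hy1, hyR⟩ := bisim_ehat' hR w y0 x0 hy x hx
    rw [hO y0 hy0 w y hy1]
    exact hR.2.2.2 (y, x) hyR
  · intro hO x0 hx0 w x hx
    obtain ⟨y0, hy0, hy⟩ := hi1 x0 hx0
    obtain ⟨y, hy1, hyR⟩ := bisim_ehat hR w x0 y0 hy x hx
    rw [hO y0 hy0 w y hy1]
    exact (hR.2.2.2 (x, y) hyR).symm
end

section
/- Adding a bisimilar component to a composition does not change critical observers: if M2 and M3 are bisimilar FSMs (with critical-state-preserving bisimulation), then a deterministic FSM Obs is a critical observer for M1 || M2 if and only if it is a critical observer for M1 || M2 || M3. -/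
open Classical

section Aux

open FSM

variable {S1 S2 S3 A : Type} {M1 : FSM S1 A} {M2 : FSM S2 A} {M3 : FSM S3 A}
  {R : Set (S2 × S3)}

lemma step_lift (halph : M2.alph = M3.alph)
    (hfwd : ∀ p ∈ R, ∀ σ : A, ∀ x2' ∈ M2.tr p.1 σ, ∃ x3' ∈ M3.tr p.2 σ, (x2', x3') ∈ R)
    {x1 z1 : S1} {x2 z2 : S2} {x3 : S3} {σ : A}
    (hR : (x2, x3) ∈ R) (hst : (z1, z2) ∈ (M1.par M2).tr (x1, x2) σ) :
    ∃ z3, ((z1, z2), z3) ∈ ((M1.par M2).par M3).tr ((x1, x2), x3) σ ∧ (z2, z3) ∈ R := by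
  simp only [FSM.par, Set.mem_setOf_eq, Set.mem_union] at hst ⊢
  rcases hst with ⟨h1, h2, hz1, hz2⟩ | ⟨h1, h2, hz1, hz2⟩ | ⟨h1, h2, hz1, hz2⟩
  · obtain ⟨z3, hz3, hR'⟩ := hfwd (x2, x3) hR σ z2 hz2
    exact ⟨z3, Or.inl ⟨Or.inl h1, halph ▸ h2, Or.inl ⟨h1, h2, hz1, hz2⟩, hz3⟩, hR'⟩
  · refine ⟨x3, Or.inr (Or.inl ⟨Or.inl h1, halph ▸ h2, Or.inr (Or.inl ⟨h1, h2, hz1, hz2⟩), rfl⟩), ?_⟩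
    rw [hz2]; exact hR
  · obtain ⟨z3, hz3, hR'⟩ := hfwd (x2, x3) hR σ z2 hz2
    exact ⟨z3, Or.inl ⟨Or.inr h2, halph ▸ h2, Or.inr (Or.inr ⟨h1, h2, hz1, hz2⟩), hz3⟩, hR'⟩

lemma ehat_lift_s11 (halph : M2.alph = M3.alph)
    (hfwd : ∀ p ∈ R, ∀ σ : A, ∀ x2' ∈ M2.tr p.1 σ, ∃ x3' ∈ M3.tr p.2 σ, (x2', x3') ∈ R)
    (w : List A) :
    ∀ x1 : S1, ∀ x2 : S2, ∀ x3 : S3, (x2, x3) ∈ R →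
      ∀ y : S1 × S2, y ∈ (M1.par M2).ehat (x1, x2) w →
      ∃ y3, (y, y3) ∈ ((M1.par M2).par M3).ehat ((x1, x2), x3) w ∧ (y.2, y3) ∈ R := by
  induction w with
  | nil =>
    intro x1 x2 x3 hR y hy
    simp only [FSM.ehat, Set.mem_singleton_iff] at hy ⊢
    exact ⟨x3, by rw [hy], hy ▸ hR⟩
  | cons σ w ih =>
    intro x1 x2 x3 hR y hy
    simp only [FSM.ehat, Set.mem_iUnion] at hy ⊢
    obtain ⟨⟨z1, z2⟩, hz, hy⟩ := hy
    obtain ⟨z3, hz3, hR'⟩ := step_lift halph hfwd hR hz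
    obtain ⟨y3, hy3, hR''⟩ := ih z1 z2 z3 hR' y hy
    exact ⟨y3, ⟨((z1, z2), z3), hz3, hy3⟩, hR''⟩

lemma step_proj (halph : M2.alph = M3.alph)
    {x1 : S1} {x2 : S2} {x3 : S3} {σ : A} {q : (S1 × S2) × S3}
    (hst : q ∈ ((M1.par M2).par M3).tr ((x1, x2), x3) σ) :
    q.1 ∈ (M1.par M2).tr (x1, x2) σ := by
  simp only [FSM.par, Set.mem_setOf_eq, Set.mem_union] at hst
  rcases hst with ⟨_, _, hq, _⟩ | ⟨_, _, hq, _⟩ | ⟨h1, h2, _, _⟩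
  · exact hq
  · exact hq
  · exact absurd (Or.inr (halph ▸ h2)) h1

lemma ehat_proj (halph : M2.alph = M3.alph) (w : List A) :
    ∀ x1 : S1, ∀ x2 : S2, ∀ x3 : S3, ∀ y : (S1 × S2) × S3,
      y ∈ ((M1.par M2).par M3).ehat ((x1, x2), x3) w →
      y.1 ∈ (M1.par M2).ehat (x1, x2) w := by
  induction w with
  | nil =>
    intro x1 x2 x3 y hy
    simp only [FSM.ehat, Set.mem_singleton_iff] at hy ⊢
    rw [hy]
  | cons σ w ih =>
    intro x1 x2 x3 y hy
    simp only [FSM.ehat, Set.mem_iUnion] at hy ⊢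
    obtain ⟨⟨⟨z1, z2⟩, z3⟩, hz, hy⟩ := hy
    exact ⟨(z1, z2), step_proj halph hz, ih z1 z2 z3 y hy⟩

lemma step_match (halph : M2.alph = M3.alph)
    (hbwd : ∀ p ∈ R, ∀ σ : A, ∀ x3' ∈ M3.tr p.2 σ, ∃ x2' ∈ M2.tr p.1 σ, (x2', x3') ∈ R)
    {x1 : S1} {x2 x2' : S2} {x3 : S3} {σ : A} {q : (S1 × S2) × S3}
    (hR : (x2', x3) ∈ R) (hst : q ∈ ((M1.par M2).par M3).tr ((x1, x2), x3) σ) :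
    ∃ z2', (q.1.1, z2') ∈ (M1.par M2).tr (x1, x2') σ ∧ (z2', q.2) ∈ R := by
  simp only [FSM.par, Set.mem_setOf_eq, Set.mem_union] at hst
  rcases hst with ⟨h1, h2, hq1, hq2⟩ | ⟨h1, h2, hq1, hq2⟩ | ⟨h1, h2, _, _⟩
  · obtain ⟨z2', hz2', hR'⟩ := hbwd (x2', x3) hR σ q.2 hq2
    rcases hq1 with ⟨g1, g2, gq1, _⟩ | ⟨g1, g2, _, _⟩ | ⟨g1, g2, gq1, _⟩
    · exact ⟨z2', Or.inl ⟨g1, g2, gq1, hz2'⟩, hR'⟩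
    · exact absurd (halph ▸ h2) g2
    · exact ⟨z2', Or.inr (Or.inr ⟨g1, halph ▸ h2, gq1, hz2'⟩), hR'⟩
  · have h2' : σ ∉ M2.alph := fun hh => h2 (halph ▸ hh)
    rcases hq1 with ⟨_, g2, _, _⟩ | ⟨g1, g2, gq1, _⟩ | ⟨_, g2, _, _⟩
    · exact absurd g2 h2'
    · exact ⟨x2', Or.inr (Or.inl ⟨g1, g2, gq1, rfl⟩), hq2 ▸ hR⟩
    · exact absurd g2 h2'
  · exact absurd (Or.inr (halph ▸ h2)) h1

lemma ehat_match (halph : M2.alph = M3.alph)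
    (hbwd : ∀ p ∈ R, ∀ σ : A, ∀ x3' ∈ M3.tr p.2 σ, ∃ x2' ∈ M2.tr p.1 σ, (x2', x3') ∈ R)
    (w : List A) :
    ∀ x1 : S1, ∀ x2 x2' : S2, ∀ x3 : S3, (x2', x3) ∈ R →
      ∀ y : (S1 × S2) × S3, y ∈ ((M1.par M2).par M3).ehat ((x1, x2), x3) w →
      ∃ y2', (y.1.1, y2') ∈ (M1.par M2).ehat (x1, x2') w ∧ (y2', y.2) ∈ R := by
  induction w with
  | nil =>
    intro x1 x2 x2' x3 hR y hy
    simp only [FSM.ehat, Set.mem_singleton_iff] at hy ⊢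
    exact ⟨x2', by rw [hy], hy ▸ hR⟩
  | cons σ w ih =>
    intro x1 x2 x2' x3 hR y hy
    simp only [FSM.ehat, Set.mem_iUnion] at hy ⊢
    obtain ⟨⟨⟨z1, z2⟩, z3⟩, hz, hy⟩ := hy
    obtain ⟨z2', hz2', hR'⟩ := step_match halph hbwd hR hz
    obtain ⟨y2', hy2', hR''⟩ := ih z1 z2 z2' z3 hR' y hy
    exact ⟨y2', ⟨(z1, z2'), hz2', hy2'⟩, hR''⟩

end Aux

/-- If `M2` and `M3` are bisimilar, then `Obs` is a critical
observer for `M1 || M2` iff it is one for `M1 || M2 || M3`. -/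
theorem stmt_11 {S1 S2 S3 A T : Type}
    (M1 : FSM S1 A) (M2 : FSM S2 A) (M3 : FSM S3 A)
    (h : M2.Bisimilar M3) (O : DObs T A) :
    O.IsCritObserver (M1.par M2) ↔ O.IsCritObserver ((M1.par M2).par M3) := by
  obtain ⟨halph, R, ⟨hinitR, hfwd, hbwd, hcrit⟩, htot23, htot32⟩ := h
  constructor
  · rintro hO ⟨⟨x01, x02⟩, x03⟩ hx0 w y hy
    have hx0P : (x01, x02) ∈ (M1.par M2).init := hx0.1
    have hx03 : x03 ∈ M3.init := hx0.2
    have hproj := ehat_proj (M1 := M1) halph w x01 x02 x03 y hy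
    obtain ⟨x2', hx2', hR0⟩ := htot32 x03 hx03
    obtain ⟨y2', hy2', hRy⟩ := ehat_match halph hbwd w x01 x02 x2' x03 hR0 y hy
    have e1 := hO (x01, x02) hx0P w y.1 hproj
    have e2 := hO (x01, x2') ⟨hx0P.1, hx2'⟩ w (y.1.1, y2') hy2'
    have hc := hcrit (y2', y.2) hRy
    simp only [FSM.par, Set.mem_setOf_eq] at e1 e2 hc ⊢
    constructor
    · intro hout
      exact Or.inl (e1.mp hout)
    · rintro (hP | h3)
      · exact e1.mpr hP
      · exact e2.mpr (Or.inr (hc.mpr h3))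
  · rintro hO3 ⟨x01, x02⟩ hx0 w ⟨y1, y2⟩ hy
    obtain ⟨x03, hx03, hR0⟩ := htot23 x02 hx0.2
    obtain ⟨y3, hy3, hRy⟩ := ehat_lift_s11 halph hfwd w x01 x02 x03 hR0 (y1, y2) hy
    have e := hO3 ((x01, x02), x03) ⟨hx0, hx03⟩ w ((y1, y2), y3) hy3
    have hc := hcrit (y2, y3) hRy
    simp only [FSM.par, Set.mem_setOf_eq] at e hc ⊢
    constructor
    · intro hout
      rcases e.mp hout with hP | h3
      · exact hP
      · exact Or.inr (hc.mpr h3)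
    · intro hP
      exact e.mpr (Or.inl hP)
end

section
/- Adding a bisimilar component to a composition preserves critical observability: if M2 and M3 are bisimilar FSMs (with critical-state-preserving bisimulation and Σ2 = Σ3), then M1 || M2 is critically observable if and only if M1 || M2 || M3 is critically observable. -/
open Classical

private lemma ehat_cons' {S A : Type} (M : FSM S A) (x : S) (σ : A) (w : List A) (y : S) :
    y ∈ M.ehat x (σ :: w) ↔ ∃ z ∈ M.tr x σ, y ∈ M.ehat z w := by
  simp [FSM.ehat]

section Aux
variable {S1 S2 S3 A : Type} {M1 : FSM S1 A} {M2 : FSM S2 A} {M3 : FSM S3 A}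
  {R : Set (S2 × S3)}

private lemma projA (hAl : M2.alph = M3.alph) :
    ∀ (w : List A) (x1 : S1) (x2 : S2) (x3 : S3) (p : (S1 × S2) × S3),
      p ∈ ((M1.par M2).par M3).ehat ((x1, x2), x3) w →
      p.1 ∈ (M1.par M2).ehat (x1, x2) w := by
  intro w
  induction w with
  | nil =>
    intro x1 x2 x3 p hp
    simp only [FSM.ehat, Set.mem_singleton_iff] at hp ⊢
    rw [hp]
  | cons σ w ih =>
    intro x1 x2 x3 p hp
    rw [ehat_cons'] at hp
    obtain ⟨z, hz, hp⟩ := hp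
    rw [ehat_cons']
    refine ⟨z.1, ?_, ih z.1.1 z.1.2 z.2 p hp⟩
    simp only [FSM.par, Set.mem_setOf_eq] at hz
    rcases hz with ⟨_, _, h1, _⟩ | ⟨_, _, h1, _⟩ | ⟨hna, hin3, _, _⟩
    · exact h1
    · exact h1
    · exact absurd (Or.inr (hAl ▸ hin3)) hna

private lemma compan (hAl : M2.alph = M3.alph) (hR : M2.IsBisim M3 R) :
    ∀ (w : List A) (x1 : S1) (x2 : S2) (x3 : S3) (x2' : S2), (x2', x3) ∈ R →
      ∀ p ∈ ((M1.par M2).par M3).ehat ((x1, x2), x3) w,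
      ∃ x2'' : S2, (p.1.1, x2'') ∈ (M1.par M2).ehat (x1, x2') w ∧ (x2'', p.2) ∈ R := by
  intro w
  induction w with
  | nil =>
    intro x1 x2 x3 x2' hr p hp
    simp only [FSM.ehat, Set.mem_singleton_iff] at hp
    subst hp
    exact ⟨x2', by simp [FSM.ehat], hr⟩
  | cons σ w ih =>
    intro x1 x2 x3 x2' hr p hp
    rw [ehat_cons'] at hp
    obtain ⟨z, hz, hp⟩ := hp
    simp only [FSM.par, Set.mem_setOf_eq] at hz
    rcases hz with ⟨ha12, ha3, hz1, hz2⟩ | ⟨ha12, ha3, hz1, hz2⟩ | ⟨hna, hin3, _, _⟩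
    · -- σ shared with Σ3 = Σ2
      obtain ⟨y2, hy2, hy2R⟩ := hR.2.2.1 (x2', x3) hr σ z.2 hz2
      obtain ⟨x2'', h1, h2⟩ := ih z.1.1 z.1.2 z.2 y2 hy2R p hp
      refine ⟨x2'', ?_, h2⟩
      rw [ehat_cons']
      refine ⟨(z.1.1, y2), ?_, h1⟩
      simp only [FSM.par, Set.mem_setOf_eq] at hz1 ⊢
      rcases hz1 with ⟨h1', h2', h3', _⟩ | ⟨_, h2', _, _⟩ | ⟨h1', h2', h3', _⟩
      · exact Or.inl ⟨h1', h2', h3', hy2⟩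
      · exact absurd (hAl ▸ ha3) h2'
      · exact Or.inr (Or.inr ⟨h1', h2', h3', hy2⟩)
    · -- σ ∉ Σ3 (hence ∉ Σ2), private to M1
      have ha2 : σ ∉ M2.alph := fun hh => ha3 (hAl ▸ hh)
      rcases hz1 with ⟨_, h2', _, _⟩ | ⟨h1', h2', h3', h4'⟩ | ⟨_, h2', _, _⟩
      · exact absurd h2' ha2
      · obtain ⟨x2'', hh1, hh2⟩ := ih z.1.1 z.1.2 z.2 x2' (hz2 ▸ hr) p hp
        refine ⟨x2'', ?_, hh2⟩
        rw [ehat_cons']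
        refine ⟨(z.1.1, x2'), ?_, hh1⟩
        exact Or.inr (Or.inl ⟨h1', h2', h3', rfl⟩)
      · exact absurd h2' ha2
    · exact absurd (Or.inr (hAl ▸ hin3)) hna

private lemma liftB (hAl : M2.alph = M3.alph) (hR : M2.IsBisim M3 R) :
    ∀ (w : List A) (x1 : S1) (x2 : S2) (x3 : S3), (x2, x3) ∈ R →
      ∀ q ∈ (M1.par M2).ehat (x1, x2) w,
      ∃ x3' : S3, (q, x3') ∈ ((M1.par M2).par M3).ehat ((x1, x2), x3) w ∧ (q.2, x3') ∈ R := by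
  intro w
  induction w with
  | nil =>
    intro x1 x2 x3 hr q hq
    simp only [FSM.ehat, Set.mem_singleton_iff] at hq
    subst hq
    exact ⟨x3, by simp [FSM.ehat], hr⟩
  | cons σ w ih =>
    intro x1 x2 x3 hr q hq
    rw [ehat_cons'] at hq
    obtain ⟨z, hz, hq⟩ := hq
    have hz' := hz
    simp only [FSM.par, Set.mem_setOf_eq] at hz'
    rcases hz' with ⟨h1, h2, h3, h4⟩ | ⟨h1, h2, h3, h4⟩ | ⟨h1, h2, h3, h4⟩
    · obtain ⟨y3, hy3, hy3R⟩ := hR.2.1 (x2, x3) hr σ z.2 h4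
      obtain ⟨x3', hh1, hh2⟩ := ih z.1 z.2 y3 hy3R q hq
      refine ⟨x3', ?_, hh2⟩
      rw [ehat_cons']
      refine ⟨(z, y3), ?_, hh1⟩
      exact Or.inl ⟨Or.inl h1, hAl ▸ h2, hz, hy3⟩
    · -- σ private to M1
      obtain ⟨x3', hh1, hh2⟩ := ih z.1 z.2 x3 (h4 ▸ hr) q hq
      refine ⟨x3', ?_, hh2⟩
      rw [ehat_cons']
      refine ⟨(z, x3), ?_, hh1⟩
      exact Or.inr (Or.inl ⟨Or.inl h1, fun hh => h2 (hAl ▸ hh), hz, rfl⟩)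
    · obtain ⟨y3, hy3, hy3R⟩ := hR.2.1 (x2, x3) hr σ z.2 h4
      obtain ⟨x3', hh1, hh2⟩ := ih z.1 z.2 y3 hy3R q hq
      refine ⟨x3', ?_, hh2⟩
      rw [ehat_cons']
      refine ⟨(z, y3), ?_, hh1⟩
      exact Or.inl ⟨Or.inr h2, hAl ▸ h2, hz, hy3⟩

end Aux

/-- If `M2` and `M3` are bisimilar, then `M1 || M2` is critically
observable iff `M1 || M2 || M3` is. -/
theorem stmt_12 {S1 S2 S3 A : Type}
    (M1 : FSM S1 A) (M2 : FSM S2 A) (M3 : FSM S3 A)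
    (h : M2.Bisimilar M3) :
    (M1.par M2).CritObs ↔ ((M1.par M2).par M3).CritObs := by
  obtain ⟨hAl, R, hR, hI23, hI32⟩ := h
  constructor
  · intro hCO w
    rcases hCO w with hc | hnc
    · left
      intro p hp
      simp only [FSM.reach, Set.mem_iUnion] at hp
      obtain ⟨x0, hx0, hp⟩ := hp
      have hp1 := projA (M1 := M1) hAl w x0.1.1 x0.1.2 x0.2 p hp
      have hreach : p.1 ∈ (M1.par M2).reach w := by
        simp only [FSM.reach, Set.mem_iUnion]
        exact ⟨x0.1, hx0.1, hp1⟩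
      exact Or.inl (hc hreach)
    · right
      intro p hp
      simp only [FSM.reach, Set.mem_iUnion] at hp
      obtain ⟨x0, hx0, hp⟩ := hp
      have hp1 := projA (M1 := M1) hAl w x0.1.1 x0.1.2 x0.2 p hp
      obtain ⟨x02', hx02', hrr⟩ := hI32 x0.2 hx0.2
      obtain ⟨x2'', hmem, hRp⟩ := compan (M1 := M1) hAl hR w x0.1.1 x0.1.2 x0.2 x02' hrr p hp
      have h1 : p.1 ∉ (M1.par M2).crit := hnc (by
        simp only [FSM.reach, Set.mem_iUnion]
        exact ⟨x0.1, hx0.1, hp1⟩)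
      have h2 : (p.1.1, x2'') ∉ (M1.par M2).crit := hnc (by
        simp only [FSM.reach, Set.mem_iUnion]
        exact ⟨(x0.1.1, x02'), ⟨hx0.1.1, hx02'⟩, hmem⟩)
      intro hcrit
      rcases hcrit with hcrit | hcrit
      · exact h1 hcrit
      · exact h2 (Or.inr ((hR.2.2.2 (x2'', p.2) hRp).mpr hcrit))
  · intro hCO w
    rcases hCO w with hc | hnc
    · left
      intro q hq
      simp only [FSM.reach, Set.mem_iUnion] at hq
      obtain ⟨x0, hx0, hq⟩ := hq
      obtain ⟨x3, hx3, hr⟩ := hI23 x0.2 hx0.2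
      obtain ⟨x3', hmem, hRp⟩ := liftB (M1 := M1) hAl hR w x0.1 x0.2 x3 hr q hq
      have hreach : (q, x3') ∈ ((M1.par M2).par M3).reach w := by
        simp only [FSM.reach, Set.mem_iUnion]
        exact ⟨(x0, x3), ⟨hx0, hx3⟩, hmem⟩
      rcases hc hreach with hcr | hcr
      · exact hcr
      · exact Or.inr ((hR.2.2.2 (q.2, x3') hRp).mpr hcr)
    · right
      intro q hq
      simp only [FSM.reach, Set.mem_iUnion] at hq
      obtain ⟨x0, hx0, hq⟩ := hq
      obtain ⟨x3, hx3, hr⟩ := hI23 x0.2 hx0.2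
      obtain ⟨x3', hmem, hRp⟩ := liftB (M1 := M1) hAl hR w x0.1 x0.2 x3 hr q hq
      have hnc' : (q, x3') ∉ ((M1.par M2).par M3).crit := hnc (by
        simp only [FSM.reach, Set.mem_iUnion]
        exact ⟨(x0, x3), ⟨hx0, hx3⟩, hmem⟩)
      exact fun hcr => hnc' (Or.inl hcr)
end

section
/- In run form, the decentralized observer is correct: given a network of FSMs M1, ..., MN, for every run of M1 || ... || MN reaching composite state (x1, ..., xN) via trace w, the tuple of local observer states (z1, ..., zN) reached by the local observers Obs(Mi) reading the projected traces P_{Σi}(w) satisfies: the OR of the local outputs ∨_i H_{Obs,i}(zi) = 1 if and only if the reachable set of the composed machine after w intersects the composed critical set. -/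
open Classical

namespace FSM

variable {A : Type} {ι : Type} {S : ι → Type}

lemma letters_of_ehat (M : ∀ i, FSM (S i) A) :
    ∀ (w : List A) (p y : ∀ i, S i), y ∈ (parN M).ehat p w →
      ∀ σ ∈ w, σ ∈ ⋃ i, (M i).alph := by
  intro w
  induction w with
  | nil => intro p y _ σ hσ; simp at hσ
  | cons a w ih =>
    intro p y hy σ hσ
    simp only [ehat, Set.mem_iUnion] at hy
    obtain ⟨q, hq, hyq⟩ := hy
    rcases List.mem_cons.mp hσ with rfl | hσ
    · exact hq.1
    · exact ih q y hyq σ hσ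

lemma key (M : ∀ i, FSM (S i) A) :
    ∀ (w : List A), (∀ σ ∈ w, σ ∈ ⋃ i, (M i).alph) →
      ∀ (z : ∀ i, Set (S i)) (y : ∀ i, S i),
      (∃ p, (∀ i, p i ∈ z i) ∧ y ∈ (parN M).ehat p w) ↔
        ∀ i, y i ∈ (M i).obsRun (z i) (proj (M i).alph w) := by
  intro w
  induction w with
  | nil =>
    intro _ z y
    simp only [ehat, proj, obsRun, Set.mem_singleton_iff]
    constructor
    · rintro ⟨p, hp, rfl⟩; exact hp
    · intro h; exact ⟨y, h, rfl⟩
  | cons a w ih =>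
    intro hw z y
    have ha : a ∈ ⋃ i, (M i).alph := hw a (by simp)
    have hw' : ∀ σ ∈ w, σ ∈ ⋃ i, (M i).alph := fun σ hσ => hw σ (by simp [hσ])
    set z' : ∀ i, Set (S i) := fun i =>
      if a ∈ (M i).alph then (M i).obsStep (z i) a else z i with hz'
    have hobs : ∀ i, (M i).obsRun (z i) (proj (M i).alph (a :: w)) =
        (M i).obsRun (z' i) (proj (M i).alph w) := by
      intro i
      by_cases h : a ∈ (M i).alph <;> simp [proj, h, obsRun, hz']
    constructor
    · rintro ⟨p, hp, hy⟩
      simp only [ehat, Set.mem_iUnion] at hy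
      obtain ⟨q, hq, hyq⟩ := hy
      have hq' : ∀ i, q i ∈ z' i := by
        intro i
        by_cases h : a ∈ (M i).alph
        · simp only [hz', if_pos h, obsStep, Set.mem_iUnion]
          exact ⟨p i, hp i, (hq.2 i).1 h⟩
        · simp only [hz', if_neg h]
          rw [(hq.2 i).2 h]; exact hp i
      intro i
      rw [hobs i]
      exact ((ih hw' z' y).mp ⟨q, hq', hyq⟩) i
    · intro h
      have h' : ∀ i, y i ∈ (M i).obsRun (z' i) (proj (M i).alph w) := by
        intro i; rw [← hobs i]; exact h i
      obtain ⟨q, hq, hyq⟩ := (ih hw' z' y).mpr h'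
      have hchoice : ∀ i, ∃ pi ∈ z i,
          (a ∈ (M i).alph → q i ∈ (M i).tr pi a) ∧ (a ∉ (M i).alph → q i = pi) := by
        intro i
        by_cases hi : a ∈ (M i).alph
        · have := hq i
          simp only [hz', if_pos hi, obsStep, Set.mem_iUnion] at this
          obtain ⟨pi, hpi, hqpi⟩ := this
          exact ⟨pi, hpi, fun _ => hqpi, fun h => absurd hi h⟩
        · have := hq i
          simp only [hz', if_neg hi] at this
          exact ⟨q i, this, fun h => absurd h hi, fun _ => rfl⟩
      choose p hp1 hp2 hp3 using hchoice
      refine ⟨p, hp1, ?_⟩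
      simp only [ehat, Set.mem_iUnion]
      refine ⟨q, ⟨ha, fun i => ⟨hp2 i, hp3 i⟩⟩, hyq⟩

lemma reach_iff (M : ∀ i, FSM (S i) A) (w : List A)
    (hw : ∀ σ ∈ w, σ ∈ ⋃ i, (M i).alph) (y : ∀ i, S i) :
    y ∈ (parN M).reach w ↔
      ∀ i, y i ∈ (M i).obsRun (M i).init (proj (M i).alph w) := by
  rw [← key M w hw (fun i => (M i).init) y]
  simp only [reach, Set.mem_iUnion]
  constructor
  · rintro ⟨p, hp, hy⟩; exact ⟨p, hp, hy⟩
  · rintro ⟨p, hp, hy⟩; exact ⟨p, hp, hy⟩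

end FSM

/-- Decentralized observer correctness, in run form: for every run
of the composed network reaching some state via trace `w`, the OR of the local
observer outputs (each local observer having read the projection of `w` onto
its alphabet) is 1 iff the reachable set of the composed machine after `w`
intersects the composed critical set. -/
theorem stmt_13 {A : Type} {N : ℕ} {S : Fin N → Type}
    (M : ∀ i, FSM (S i) A) (w : List A) (x : ∀ i, S i)
    (hx : x ∈ (FSM.parN M).reach w) :
    (∃ i, (((M i).obsRun (M i).init (FSM.proj (M i).alph w)) ∩ (M i).crit).Nonempty) ↔
      (((FSM.parN M).reach w) ∩ (FSM.parN M).crit).Nonempty := by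
  have hw : ∀ σ ∈ w, σ ∈ ⋃ i, (M i).alph := by
    simp only [FSM.reach, Set.mem_iUnion] at hx
    obtain ⟨p, _, hy⟩ := hx
    exact FSM.letters_of_ehat M w p x hy
  have hx' := (FSM.reach_iff M w hw x).mp hx
  constructor
  · rintro ⟨i, s, hs, hsc⟩
    refine ⟨Function.update x i s, ?_, ?_⟩
    · rw [FSM.reach_iff M w hw]
      intro j
      by_cases h : j = i
      · subst h; simpa using hs
      · rw [Function.update_of_ne h]; exact hx' j
    · exact ⟨i, by simpa using hsc⟩
  · rintro ⟨y, hy, i, hyc⟩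
    exact ⟨i, y i, (FSM.reach_iff M w hw y).mp hy i, hyc⟩
end

section
/- Bisimilarity is a congruence for parallel composition with respect to critical observability transfer: if M2 ≅ M3 (bisimilar with critical-state preservation, Σ2 = Σ3), then M1 || M2 ≅ M1 || M3, where the bisimulation relation on products is {((x1, x2), (x1', x3)) : x1 = x1' and (x2, x3) ∈ R} for R a bisimulation between M2 and M3. -/
open Classical

/-- Bisimilarity is a congruence for parallel composition: if
`R` is a bisimulation between `M2` and `M3` (with matched initial states and
`Σ2 = Σ3`), then the relation `{((x1, x2), (x1', x3)) | x1 = x1' ∧ (x2, x3) ∈ R}`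
is a bisimulation between `M1 || M2` and `M1 || M3`; hence `M1 || M2 ≅ M1 || M3`. -/
theorem stmt_15 {S1 S2 S3 A : Type}
    (M1 : FSM S1 A) (M2 : FSM S2 A) (M3 : FSM S3 A)
    (halph : M2.alph = M3.alph) (R : Set (S2 × S3))
    (hR : FSM.IsBisim M2 M3 R)
    (hinit1 : ∀ x2 ∈ M2.init, ∃ x3 ∈ M3.init, (x2, x3) ∈ R)
    (hinit2 : ∀ x3 ∈ M3.init, ∃ x2 ∈ M2.init, (x2, x3) ∈ R) :
    FSM.IsBisim (M1.par M2) (M1.par M3)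
      {p : (S1 × S2) × (S1 × S3) | p.1.1 = p.2.1 ∧ (p.1.2, p.2.2) ∈ R} ∧
    (M1.par M2).Bisimilar (M1.par M3) := by
  obtain ⟨hRi, hRf, hRb, hRc⟩ := hR
  have key : FSM.IsBisim (M1.par M2) (M1.par M3)
      {p : (S1 × S2) × (S1 × S3) | p.1.1 = p.2.1 ∧ (p.1.2, p.2.2) ∈ R} := by
    refine ⟨?_, ?_, ?_, ?_⟩
    · rintro ⟨⟨x1, x2⟩, ⟨y1, y3⟩⟩ ⟨heq, hr⟩
      simp only [FSM.par, Set.mem_prod] at *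
      subst heq
      have := hRi _ hr
      simp only at this
      constructor
      · rintro ⟨h1, h2⟩; exact ⟨h1, this.mp h2⟩
      · rintro ⟨h1, h2⟩; exact ⟨h1, this.mpr h2⟩
    · rintro ⟨⟨x1, x2⟩, ⟨y1, y3⟩⟩ ⟨heq, hr⟩ σ ⟨z1, z2⟩ hz
      simp only at heq; subst heq
      simp only [FSM.par, Set.mem_setOf_eq] at hz ⊢
      rcases hz with ⟨h1, h2, ht1, ht2⟩ | ⟨h1, h2, ht1, ht2⟩ | ⟨h1, h2, ht1, ht2⟩
      · obtain ⟨z3, hz3, hr'⟩ := hRf _ hr σ z2 ht2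
        exact ⟨(z1, z3), Or.inl ⟨h1, halph ▸ h2, ht1, hz3⟩, rfl, hr'⟩
      · exact ⟨(z1, y3), Or.inr (Or.inl ⟨h1, halph ▸ h2, ht1, rfl⟩), rfl, ht2 ▸ hr⟩
      · obtain ⟨z3, hz3, hr'⟩ := hRf _ hr σ z2 ht2
        exact ⟨(z1, z3), Or.inr (Or.inr ⟨h1, halph ▸ h2, ht1, hz3⟩), rfl, hr'⟩
    · rintro ⟨⟨x1, x2⟩, ⟨y1, y3⟩⟩ ⟨heq, hr⟩ σ ⟨z1, z3⟩ hz
      simp only at heq; subst heq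
      simp only [FSM.par, Set.mem_setOf_eq] at hz ⊢
      rcases hz with ⟨h1, h2, ht1, ht2⟩ | ⟨h1, h2, ht1, ht2⟩ | ⟨h1, h2, ht1, ht2⟩
      · obtain ⟨z2, hz2, hr'⟩ := hRb _ hr σ z3 ht2
        exact ⟨(z1, z2), Or.inl ⟨h1, halph ▸ h2, ht1, hz2⟩, rfl, hr'⟩
      · exact ⟨(z1, x2), Or.inr (Or.inl ⟨h1, halph ▸ h2, ht1, rfl⟩), rfl, ht2 ▸ hr⟩
      · obtain ⟨z2, hz2, hr'⟩ := hRb _ hr σ z3 ht2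
        exact ⟨(z1, z2), Or.inr (Or.inr ⟨h1, halph ▸ h2, ht1, hz2⟩), rfl, hr'⟩
    · rintro ⟨⟨x1, x2⟩, ⟨y1, y3⟩⟩ ⟨heq, hr⟩
      simp only at heq; subst heq
      simp only [FSM.par, Set.mem_setOf_eq]
      have := hRc _ hr
      simp only at this
      constructor
      · rintro (h | h); exacts [Or.inl h, Or.inr (this.mp h)]
      · rintro (h | h); exacts [Or.inl h, Or.inr (this.mpr h)]
  refine ⟨key, ?_, ?_⟩
  · show M1.alph ∪ M2.alph = M1.alph ∪ M3.alph
    rw [halph]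
  · refine ⟨_, key, ?_, ?_⟩
    · rintro ⟨x1, x2⟩ hx
      simp only [FSM.par, Set.mem_prod] at hx
      obtain ⟨x3, hx3, hr⟩ := hinit1 x2 hx.2
      exact ⟨(x1, x3), ⟨hx.1, hx3⟩, rfl, hr⟩
    · rintro ⟨x1, x3⟩ hx
      simp only [FSM.par, Set.mem_prod] at hx
      obtain ⟨x2, hx2, hr⟩ := hinit2 x3 hx.2
      exact ⟨(x1, x2), ⟨hx.1, hx2⟩, rfl, hr⟩
end

section
/- Quotient network preserves critical observability: let N = {M1, ..., MN} be a network of FSMs, and let N^min = {M_{i1}, ..., M_{ik}} contain exactly one representative of each bisimulation-equivalence class of N (every Mj ∈ N is bisimilar, with a critical-state-preserving bisimulation with matching alphabets, to some representative in N^min). Then M1 || ... || MN is critically observable if and only if M_{i1} || ... || M_{ik} is critically observable. -/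
open Classical

section Aux

open FSM

variable {A : Type}

lemma FSM.mem_ehat_nil_iff {S : Type} (M : FSM S A) (x x' : S) :
    x' ∈ M.ehat x [] ↔ x' = x := by simp [FSM.ehat]

lemma FSM.mem_ehat_cons_iff {S : Type} (M : FSM S A) (x x' : S) (σ : A) (w : List A) :
    x' ∈ M.ehat x (σ :: w) ↔ ∃ y ∈ M.tr x σ, x' ∈ M.ehat y w := by
  simp [FSM.ehat]

lemma FSM.mem_reach_iff {S : Type} (M : FSM S A) (x : S) (w : List A) :
    x ∈ M.reach w ↔ ∃ x0 ∈ M.init, x ∈ M.ehat x0 w := by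
  simp [FSM.reach]

lemma FSM.mem_parN_tr_iff {ι : Type} {S : ι → Type} (M : ∀ i, FSM (S i) A)
    (p q : ∀ i, S i) (σ : A) :
    q ∈ (parN M).tr p σ ↔ σ ∈ (⋃ i, (M i).alph) ∧
      ∀ i, (σ ∈ (M i).alph → q i ∈ (M i).tr (p i) σ) ∧ (σ ∉ (M i).alph → q i = p i) :=
  Iff.rfl

lemma FSM.mem_parN_init_iff {ι : Type} {S : ι → Type} (M : ∀ i, FSM (S i) A)
    (p : ∀ i, S i) :
    p ∈ (parN M).init ↔ ∀ i, p i ∈ (M i).init := Iff.rfl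

lemma FSM.mem_parN_crit_iff {ι : Type} {S : ι → Type} (M : ∀ i, FSM (S i) A)
    (p : ∀ i, S i) :
    p ∈ (parN M).crit ↔ ∃ i, p i ∈ (M i).crit := Iff.rfl

theorem quotient_critobs {A : Type} {N : ℕ} {S : Fin N → Type}
    (M : ∀ i, FSM (S i) A) (rep : Fin N → Fin N)
    (hidem : ∀ j, rep (rep j) = rep j)
    (hbis : ∀ j, (M j).Bisimilar (M (rep j))) :
    (FSM.parN M).CritObs ↔
      (FSM.parN (fun i : {i : Fin N // rep i = i} => M i.1)).CritObs := by
  classical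
  obtain ⟨R, hRB, hRi1, hRi2⟩ :
      ∃ R : ∀ j, Set (S j × S (rep j)),
        (∀ j, IsBisim (M j) (M (rep j)) (R j)) ∧
        (∀ j, ∀ x1 ∈ (M j).init, ∃ x2 ∈ (M (rep j)).init, (x1, x2) ∈ R j) ∧
        (∀ j, ∀ x2 ∈ (M (rep j)).init, ∃ x1 ∈ (M j).init, (x1, x2) ∈ R j) := by
    choose R h1 h2 h3 using fun j => (hbis j).2
    exact ⟨R, h1, h2, h3⟩
  have halph : ∀ j, (M j).alph = (M (rep j)).alph := fun j => (hbis j).1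
  have hU : (⋃ j, (M j).alph) = ⋃ i : {i : Fin N // rep i = i}, (M i.1).alph := by
    ext σ
    simp only [Set.mem_iUnion]
    constructor
    · rintro ⟨j, h⟩
      exact ⟨⟨rep j, hidem j⟩, (halph j) ▸ h⟩
    · rintro ⟨i, h⟩
      exact ⟨i.1, h⟩
  -- Lift a run of the representative network to a run of the full network,
  -- each component tracking its representative via the bisimulation.
  have lift : ∀ (w : List A) (q0 q : ∀ i : {i : Fin N // rep i = i}, S i.1),
      q ∈ (parN fun i : {i : Fin N // rep i = i} => M i.1).ehat q0 w →
      ∀ p0 : ∀ i, S i, (∀ j, (p0 j, q0 ⟨rep j, hidem j⟩) ∈ R j) →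
      ∃ p ∈ (parN M).ehat p0 w, ∀ j, (p j, q ⟨rep j, hidem j⟩) ∈ R j := by
    intro w
    induction w with
    | nil =>
      intro q0 q hq p0 h0
      rw [mem_ehat_nil_iff] at hq; subst hq
      exact ⟨p0, by rw [mem_ehat_nil_iff], h0⟩
    | cons σ w ih =>
      intro q0 q hq p0 h0
      rw [mem_ehat_cons_iff] at hq
      obtain ⟨q1, hq1, hq⟩ := hq
      rw [mem_parN_tr_iff] at hq1
      obtain ⟨hσ, hstep⟩ := hq1
      have hch : ∀ j, ∃ x1' : S j,
          ((σ ∈ (M j).alph ∧ x1' ∈ (M j).tr (p0 j) σ) ∨ (σ ∉ (M j).alph ∧ x1' = p0 j)) ∧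
          (x1', q1 ⟨rep j, hidem j⟩) ∈ R j := by
        intro j
        by_cases hj : σ ∈ (M j).alph
        · have hj' : σ ∈ (M (rep j)).alph := halph j ▸ hj
          have h2 := (hstep ⟨rep j, hidem j⟩).1 hj'
          obtain ⟨x1', hx1, hxr⟩ := (hRB j).2.2.1 (p0 j, q0 ⟨rep j, hidem j⟩) (h0 j) σ
            (q1 ⟨rep j, hidem j⟩) h2
          exact ⟨x1', Or.inl ⟨hj, hx1⟩, hxr⟩
        · have hj' : σ ∉ (M (rep j)).alph := halph j ▸ hj
          have h2 := (hstep ⟨rep j, hidem j⟩).2 hj'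
          exact ⟨p0 j, Or.inr ⟨hj, rfl⟩, h2 ▸ h0 j⟩
      choose p1 hp1 using hch
      have hp1tr : p1 ∈ (parN M).tr p0 σ := by
        rw [mem_parN_tr_iff]
        refine ⟨hU.symm ▸ hσ, fun j => ⟨fun hj => ?_, fun hj => ?_⟩⟩
        · rcases (hp1 j).1 with h | h
          · exact h.2
          · exact absurd hj h.1
        · rcases (hp1 j).1 with h | h
          · exact absurd h.1 hj
          · exact h.2
      obtain ⟨p, hp, hrel⟩ := ih q1 q hq p1 fun j => (hp1 j).2
      exact ⟨p, (mem_ehat_cons_iff ..).2 ⟨p1, hp1tr, hp⟩, hrel⟩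
  -- Track component `j` of a run of the full network inside the representative
  -- network, keeping all other representative components equal to the
  -- corresponding components of the full run.
  have track : ∀ (j : Fin N) (w : List A) (p0 p : ∀ i, S i),
      p ∈ (parN M).ehat p0 w →
      ∀ q0 : ∀ i : {i : Fin N // rep i = i}, S i.1,
        (p0 j, q0 ⟨rep j, hidem j⟩) ∈ R j →
        (∀ i : {i : Fin N // rep i = i}, i ≠ ⟨rep j, hidem j⟩ → q0 i = p0 i.1) →
        ∃ q ∈ (parN fun i : {i : Fin N // rep i = i} => M i.1).ehat q0 w,
          (p j, q ⟨rep j, hidem j⟩) ∈ R j := by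
    intro j w
    induction w with
    | nil =>
      intro p0 p hp q0 h0 _
      rw [mem_ehat_nil_iff] at hp; subst hp
      exact ⟨q0, by rw [mem_ehat_nil_iff], h0⟩
    | cons σ w ih =>
      intro p0 p hp q0 h0 hinv
      rw [mem_ehat_cons_iff] at hp
      obtain ⟨p1, hp1, hp⟩ := hp
      rw [mem_parN_tr_iff] at hp1
      obtain ⟨hσ, hstep⟩ := hp1
      have hy : ∃ y1 : S (rep j),
          (σ ∈ (M (rep j)).alph → y1 ∈ (M (rep j)).tr (q0 ⟨rep j, hidem j⟩) σ) ∧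
          (σ ∉ (M (rep j)).alph → y1 = q0 ⟨rep j, hidem j⟩) ∧ (p1 j, y1) ∈ R j := by
        by_cases hj : σ ∈ (M j).alph
        · have hj' : σ ∈ (M (rep j)).alph := halph j ▸ hj
          obtain ⟨y1, hy1, hyr⟩ := (hRB j).2.1 (p0 j, q0 ⟨rep j, hidem j⟩) h0 σ (p1 j)
            ((hstep j).1 hj)
          exact ⟨y1, fun _ => hy1, fun h => absurd hj' h, hyr⟩
        · have hj' : σ ∉ (M (rep j)).alph := halph j ▸ hj
          exact ⟨q0 ⟨rep j, hidem j⟩, fun h => absurd h hj', fun _ => rfl,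
            ((hstep j).2 hj) ▸ h0⟩
      obtain ⟨y1, hy1t, hy1s, hy1r⟩ := hy
      set q1 : ∀ i : {i : Fin N // rep i = i}, S i.1 :=
        Function.update (fun i => if σ ∈ (M i.1).alph then p1 i.1 else q0 i)
          ⟨rep j, hidem j⟩ y1 with hq1def
      have hq1j : q1 ⟨rep j, hidem j⟩ = y1 := Function.update_self _ _ _
      have hq1o : ∀ i, i ≠ (⟨rep j, hidem j⟩ : {i : Fin N // rep i = i}) →
          q1 i = if σ ∈ (M i.1).alph then p1 i.1 else q0 i :=
        fun i hi => Function.update_of_ne hi _ _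
      have hq1tr : q1 ∈ (parN fun i : {i : Fin N // rep i = i} => M i.1).tr q0 σ := by
        rw [mem_parN_tr_iff]
        refine ⟨hU.symm ▸ hσ, fun i => ⟨fun hi => ?_, fun hi => ?_⟩⟩
        · by_cases he : i = ⟨rep j, hidem j⟩
          · subst he; rw [hq1j]; exact hy1t hi
          · rw [hq1o i he, if_pos hi, hinv i he]
            exact (hstep i.1).1 hi
        · by_cases he : i = ⟨rep j, hidem j⟩
          · subst he; rw [hq1j]; exact hy1s hi
          · rw [hq1o i he, if_neg hi]
      have hinv1 : ∀ i, i ≠ (⟨rep j, hidem j⟩ : {i : Fin N // rep i = i}) →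
          q1 i = p1 i.1 := by
        intro i hi
        rw [hq1o i hi]
        by_cases hia : σ ∈ (M i.1).alph
        · rw [if_pos hia]
        · rw [if_neg hia, hinv i hi, (hstep i.1).2 hia]
      have hrel1 : (p1 j, q1 ⟨rep j, hidem j⟩) ∈ R j := by rw [hq1j]; exact hy1r
      obtain ⟨q, hq, hqr⟩ := ih p1 p hp q1 hrel1 hinv1
      exact ⟨q, (mem_ehat_cons_iff ..).2 ⟨q1, hq1tr, hq⟩, hqr⟩
  -- Project a run of the full network onto the representative indices.
  have projL : ∀ (w : List A) (p0 p : ∀ i, S i), p ∈ (parN M).ehat p0 w →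
      (fun i : {i : Fin N // rep i = i} => p i.1) ∈
        (parN fun i : {i : Fin N // rep i = i} => M i.1).ehat (fun i => p0 i.1) w := by
    intro w
    induction w with
    | nil =>
      intro p0 p hp
      rw [mem_ehat_nil_iff] at hp ⊢
      subst hp; rfl
    | cons σ w ih =>
      intro p0 p hp
      rw [mem_ehat_cons_iff] at hp ⊢
      obtain ⟨p1, hp1, hp⟩ := hp
      rw [mem_parN_tr_iff] at hp1
      exact ⟨fun i => p1 i.1,
        (mem_parN_tr_iff ..).2 ⟨hU ▸ hp1.1, fun i => hp1.2 i.1⟩, ih p1 p hp⟩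
  constructor
  · intro h w
    rcases h w with hc | hc
    · left
      intro q hq
      rw [mem_reach_iff] at hq
      obtain ⟨q0, hq0, hq⟩ := hq
      choose p0 hp0i hp0r using fun j => hRi2 j (q0 ⟨rep j, hidem j⟩) (hq0 ⟨rep j, hidem j⟩)
      obtain ⟨p, hp, hrel⟩ := lift w q0 q hq p0 hp0r
      have hpc : p ∈ (parN M).crit := hc ((mem_reach_iff ..).2 ⟨p0, hp0i, hp⟩)
      obtain ⟨j, hj⟩ := hpc
      exact ⟨⟨rep j, hidem j⟩, ((hRB j).2.2.2 (p j, q ⟨rep j, hidem j⟩) (hrel j)).1 hj⟩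
    · right
      intro q hq hqc
      rw [mem_reach_iff] at hq
      obtain ⟨q0, hq0, hq⟩ := hq
      choose p0 hp0i hp0r using fun j => hRi2 j (q0 ⟨rep j, hidem j⟩) (hq0 ⟨rep j, hidem j⟩)
      obtain ⟨p, hp, hrel⟩ := lift w q0 q hq p0 hp0r
      obtain ⟨i, hi⟩ := hqc
      have e : (⟨rep i.1, hidem i.1⟩ : {i : Fin N // rep i = i}) = i := Subtype.ext i.2
      rw [← e] at hi
      have hcrit : p i.1 ∈ (M i.1).crit :=
        ((hRB i.1).2.2.2 (p i.1, q ⟨rep i.1, hidem i.1⟩) (hrel i.1)).2 hi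
      exact hc ((mem_reach_iff ..).2 ⟨p0, hp0i, hp⟩) ⟨i.1, hcrit⟩
  · intro h w
    rcases h w with hc | hc
    · left
      intro p hp
      rw [mem_reach_iff] at hp
      obtain ⟨p0, hp0, hp⟩ := hp
      have hq := projL w p0 p hp
      have hqc : (fun i : {i : Fin N // rep i = i} => p i.1) ∈
          (parN fun i : {i : Fin N // rep i = i} => M i.1).crit :=
        hc ((mem_reach_iff ..).2 ⟨fun i => p0 i.1, fun i => hp0 i.1, hq⟩)
      obtain ⟨i, hi⟩ := hqc
      exact ⟨i.1, hi⟩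
    · right
      intro p hp hpc
      rw [mem_reach_iff] at hp
      obtain ⟨p0, hp0, hp⟩ := hp
      obtain ⟨j, hpj⟩ := hpc
      obtain ⟨x3, hx3i, hx3r⟩ := hRi1 j (p0 j) (hp0 j)
      set q0 : ∀ i : {i : Fin N // rep i = i}, S i.1 :=
        Function.update (fun i => p0 i.1) ⟨rep j, hidem j⟩ x3 with hq0def
      have hq0j : q0 ⟨rep j, hidem j⟩ = x3 := Function.update_self _ _ _
      have hq0o : ∀ i, i ≠ (⟨rep j, hidem j⟩ : {i : Fin N // rep i = i}) →
          q0 i = p0 i.1 := fun i hi => Function.update_of_ne hi _ _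
      have hq0i : q0 ∈ (parN fun i : {i : Fin N // rep i = i} => M i.1).init := by
        rw [mem_parN_init_iff]
        intro i
        by_cases hi : i = ⟨rep j, hidem j⟩
        · subst hi; rw [hq0j]; exact hx3i
        · rw [hq0o i hi]; exact hp0 i.1
      obtain ⟨q, hq, hqr⟩ := track j w p0 p hp q0 (by rw [hq0j]; exact hx3r) hq0o
      exact hc ((mem_reach_iff ..).2 ⟨q0, hq0i, hq⟩)
        ⟨⟨rep j, hidem j⟩, ((hRB j).2.2.2 (p j, q ⟨rep j, hidem j⟩) hqr).1 hpj⟩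

end Aux

/-- Quotient network preserves critical observability: if `rep`
selects one representative per bisimulation-equivalence class of the network
(each `M j` bisimilar to its representative `M (rep j)`, representatives
pairwise non-bisimilar), then the full composition is critically observable iff
the composition of the representatives is. -/
theorem stmt_16 {A : Type} {N : ℕ} {S : Fin N → Type}
    (M : ∀ i, FSM (S i) A) (rep : Fin N → Fin N)
    (hidem : ∀ j, rep (rep j) = rep j)
    (hbis : ∀ j, (M j).Bisimilar (M (rep j)))
    (hdistinct : ∀ i j, rep i = i → rep j = j → i ≠ j → ¬ (M i).Bisimilar (M j)) :
    (FSM.parN M).CritObs ↔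
      (FSM.parN (fun i : {i : Fin N // rep i = i} => M i.1)).CritObs :=
  quotient_critobs M rep hidem hbis
end

section
/- Quotient network observer correctness: with N and N^min as above (N^min a set of bisimulation-class representatives of N), a deterministic FSM Obs is a critical observer for the composed quotient machine M(N^min) if and only if it is a critical observer for the full composed machine M(N). -/
open Classical

/-! Runs of a composition are tuples of component runs on the projected words, and a composite
state is critical iff some component is, so the critical statuses reachable on a word are the
disjunctions of independently chosen critical statuses of the components. Bisimilar components
have the same critical statuses, hence keeping one representative per bisimulation class does
not change them, and whether a deterministic observer is a critical observer depends on these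
statuses only. -/

namespace FSM

variable {S S1 S2 A : Type}

def critStatuses (M : FSM S A) (w : List A) : Set Prop := (· ∈ M.crit) '' M.reach w

section Bisimulation

variable {M1 : FSM S1 A} {M2 : FSM S2 A} {R : Set (S1 × S2)}

theorem IsBisim.symm (h : IsBisim M1 M2 R) : IsBisim M2 M1 (Prod.swap ⁻¹' R) :=
  ⟨fun p hp => (h.1 p.swap hp).symm, fun p hp => h.2.2.1 p.swap hp,
    fun p hp => h.2.1 p.swap hp, fun p hp => (h.2.2.2 p.swap hp).symm⟩

theorem IsBisim.exists_mem_ehat (h : IsBisim M1 M2 R) (w : List A) {x1 : S1} {x2 : S2}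
    (hx : (x1, x2) ∈ R) {x1' : S1} (hx1' : x1' ∈ M1.ehat x1 w) :
    ∃ x2' ∈ M2.ehat x2 w, (x1', x2') ∈ R := by
  induction w generalizing x1 x2 with
  | nil => exact ⟨x2, rfl, (hx1' : x1' = x1) ▸ hx⟩
  | cons σ w ih =>
    simp only [ehat, Set.mem_iUnion₂] at hx1' ⊢
    obtain ⟨y1, hy1, hx1'⟩ := hx1'
    obtain ⟨y2, hy2, hy⟩ := h.2.1 (x1, x2) hx σ y1 hy1
    obtain ⟨x2', hx2', hR⟩ := ih hy hx1'
    exact ⟨x2', ⟨y2, hy2, hx2'⟩, hR⟩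

theorem Bisimilar.symm (h : M1.Bisimilar M2) : M2.Bisimilar M1 := by
  obtain ⟨halph, R, hR, hinit12, hinit21⟩ := h
  exact ⟨halph.symm, Prod.swap ⁻¹' R, hR.symm, hinit21, hinit12⟩

theorem Bisimilar.critStatuses_subset (h : M1.Bisimilar M2) (w : List A) :
    M1.critStatuses w ⊆ M2.critStatuses w := by
  rintro _ ⟨x, hx, rfl⟩
  obtain ⟨-, R, hR, hinit, -⟩ := h
  simp only [reach, Set.mem_iUnion₂] at hx
  obtain ⟨x0, hx0, hx⟩ := hx
  obtain ⟨y0, hy0, hxy0⟩ := hinit x0 hx0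
  obtain ⟨y, hy, hxy⟩ := hR.exists_mem_ehat w hxy0 hx
  exact ⟨y, Set.mem_biUnion hy0 hy, propext (hR.2.2.2 _ hxy).symm⟩

theorem Bisimilar.critStatuses_eq (h : M1.Bisimilar M2) (w : List A) :
    M1.critStatuses w = M2.critStatuses w :=
  (h.critStatuses_subset w).antisymm (h.symm.critStatuses_subset w)

end Bisimulation

theorem mem_ehat_proj_cons (M : FSM S A) (E : Set A) (x x' : S) (σ : A) (w : List A) :
    x' ∈ M.ehat x (proj E (σ :: w)) ↔
      ∃ y, ((σ ∈ E → y ∈ M.tr x σ) ∧ (σ ∉ E → y = x)) ∧ x' ∈ M.ehat y (proj E w) := by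
  by_cases hσ : σ ∈ E <;> simp [proj, ehat, hσ]

section Composition

variable {ι : Type} {Si : ι → Type} (M : ∀ i, FSM (Si i) A)

theorem mem_ehat_parN (q0 q : ∀ i, Si i) (w : List A) :
    q ∈ (parN M).ehat q0 w ↔
      (∀ σ ∈ w, σ ∈ ⋃ i, (M i).alph) ∧ ∀ i, q i ∈ (M i).ehat (q0 i) (proj (M i).alph w) := by
  induction w generalizing q0 with
  | nil => simp [ehat, proj, funext_iff]
  | cons σ w ih =>
    simp only [mem_ehat_proj_cons, Classical.skolem, ehat, Set.mem_iUnion₂, exists_prop, ih]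
    constructor
    · rintro ⟨y, ⟨hσ, hy⟩, hw, hq⟩
      exact ⟨List.forall_mem_cons.2 ⟨hσ, hw⟩, y, fun i => ⟨hy i, hq i⟩⟩
    · rintro ⟨hσw, y, hy⟩
      obtain ⟨hσ, hw⟩ := List.forall_mem_cons.1 hσw
      exact ⟨y, ⟨hσ, fun i => (hy i).1⟩, hw, fun i => (hy i).2⟩

theorem mem_reach_parN (q : ∀ i, Si i) (w : List A) :
    q ∈ (parN M).reach w ↔
      (∀ σ ∈ w, σ ∈ ⋃ i, (M i).alph) ∧ ∀ i, q i ∈ (M i).reach (proj (M i).alph w) := by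
  simp only [reach, Set.mem_iUnion₂, exists_prop, mem_ehat_parN, Classical.skolem]
  constructor
  · rintro ⟨q0, hq0, hw, hq⟩
    exact ⟨hw, q0, fun i => ⟨hq0 i, hq i⟩⟩
  · rintro ⟨hw, q0, hq⟩
    exact ⟨q0, fun i => (hq i).1, hw, fun i => (hq i).2⟩

theorem mem_critStatuses_parN (w : List A) (b : Prop) :
    b ∈ (parN M).critStatuses w ↔
      (∀ σ ∈ w, σ ∈ ⋃ i, (M i).alph) ∧
        ∃ f : ι → Prop, (∀ i, f i ∈ (M i).critStatuses (proj (M i).alph w)) ∧ b = ∃ i, f i := by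
  simp only [critStatuses, Set.mem_image, mem_reach_parN, Classical.skolem]
  constructor
  · rintro ⟨q, ⟨hw, hq⟩, rfl⟩
    exact ⟨hw, fun i => q i ∈ (M i).crit, ⟨q, fun i => ⟨hq i, rfl⟩⟩, rfl⟩
  · rintro ⟨hw, f, ⟨q, hq⟩, rfl⟩
    refine ⟨q, ⟨hw, fun i => (hq i).1⟩, ?_⟩
    exact congrArg Exists (funext fun i => (hq i).2)

end Composition

theorem critStatuses_parN_comp_eq {ι κ : Type} {Sk : κ → Type} (M : ∀ k, FSM (Sk k) A)
    (e : ι → κ) (r : κ → ι) (hre : ∀ i, r (e i) = i)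
    (hbis : ∀ k, (M k).Bisimilar (M (e (r k)))) (w : List A) :
    (parN fun i => M (e i)).critStatuses w = (parN M).critStatuses w := by
  have hstatus : ∀ k, (M k).critStatuses (proj (M k).alph w) =
      (M (e (r k))).critStatuses (proj (M (e (r k))).alph w) := fun k => by
    rw [(hbis k).critStatuses_eq, (hbis k).1]
  have halph : (⋃ i, (M (e i)).alph) = ⋃ k, (M k).alph := by
    refine (Set.iUnion_subset fun i => Set.subset_iUnion (fun k => (M k).alph) (e i)).antisymm
      (Set.iUnion_subset fun k => ?_)
    rw [(hbis k).1]
    exact Set.subset_iUnion (fun i => (M (e i)).alph) (r k)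
  ext b
  simp only [mem_critStatuses_parN, halph, and_congr_right_iff]
  intro _
  constructor
  · rintro ⟨f, hf, rfl⟩
    refine ⟨fun k => f (r k), fun k => hstatus k ▸ hf (r k), ?_⟩
    exact propext ⟨fun ⟨i, hi⟩ => ⟨e i, by simpa only [hre] using hi⟩, fun ⟨k, hk⟩ => ⟨r k, hk⟩⟩
  · rintro ⟨g, hg, rfl⟩
    refine ⟨fun i => ∃ k, r k = i ∧ g k, fun i => ?_, ?_⟩
    · show (∃ k, r k = i ∧ g k) ∈ _
      by_cases hi : ∃ k, r k = i ∧ g k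
      · obtain ⟨k, rfl, hk⟩ := hi
        have hgk : (∃ k', r k' = r k ∧ g k') = g k := propext ⟨fun _ => hk, fun h => ⟨k, rfl, h⟩⟩
        rw [hgk, ← hstatus]
        exact hg k
      · have hgi : (∃ k, r k = i ∧ g k) = g (e i) :=
          propext ⟨fun h => (hi h).elim, fun h => (hi ⟨e i, hre i, h⟩).elim⟩
        rw [hgi]
        exact hg (e i)
    · exact propext ⟨fun ⟨k, hk⟩ => ⟨r k, k, rfl, hk⟩, fun ⟨_, k, _, hk⟩ => ⟨k, hk⟩⟩

end FSM

theorem DObs.isCritObserver_iff_critStatuses {T S A : Type} (O : DObs T A) (M : FSM S A) :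
    O.IsCritObserver M ↔
      ∀ w, ∀ b ∈ M.critStatuses w, (O.out (O.run O.init w) = true ↔ b) := by
  simp only [IsCritObserver, FSM.critStatuses, FSM.reach, Set.forall_mem_image,
    Set.mem_iUnion₂]
  exact ⟨fun h w x ⟨x0, hx0, hx⟩ => h x0 hx0 w x hx, fun h x0 hx0 w _ hx => h w ⟨x0, hx0, hx⟩⟩

theorem stmt_17_general {A T : Type} {N : ℕ} {S : Fin N → Type}
    (M : ∀ i, FSM (S i) A) (rep : Fin N → Fin N)
    (hidem : ∀ j, rep (rep j) = rep j)
    (hbis : ∀ j, (M j).Bisimilar (M (rep j)))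
    (O : DObs T A) :
    O.IsCritObserver (FSM.parN (fun i : {i : Fin N // rep i = i} => M i.1)) ↔
      O.IsCritObserver (FSM.parN M) := by
  have hstatus := FSM.critStatuses_parN_comp_eq M Subtype.val (fun j => ⟨rep j, hidem j⟩)
    (fun i : {i // rep i = i} => Subtype.ext i.2) hbis
  simp only [DObs.isCritObserver_iff_critStatuses, hstatus]

/-- Quotient network observer correctness: with `rep` selecting
one representative per bisimulation class, a deterministic FSM `Obs` is a
critical observer for the quotient composition iff it is one for the full
composition. -/
theorem stmt_17 {A T : Type} {N : ℕ} {S : Fin N → Type}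
    (M : ∀ i, FSM (S i) A) (rep : Fin N → Fin N)
    (hidem : ∀ j, rep (rep j) = rep j)
    (hbis : ∀ j, (M j).Bisimilar (M (rep j)))
    (hdistinct : ∀ i j, rep i = i → rep j = j → i ≠ j → ¬ (M i).Bisimilar (M j))
    (O : DObs T A) :
    O.IsCritObserver (FSM.parN (fun i : {i : Fin N // rep i = i} => M i.1)) ↔
      O.IsCritObserver (FSM.parN M) :=
  stmt_17_general M rep hidem hbis O
end
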